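/- Let F = (f_i)_{i∈I} be a J-frame for a Krein space H with J-frame operator S = S₊ − S₋, where S₊ = T₊T₊^# and S₋ = −T₋T₋^#, and set M± = R(T±). Then R(S₊) = M₊, N(S₊) = M₊^{[⊥]}, R(S₋) = M₋, N(S₋) = M₋^{[⊥]}. Moreover, if Q is the (bounded) projection with range M₊ and kernel M₋ (well defined since H = M₊ ∔ M₋), then S₊ = Q S Q^# and S₋ = −(I − Q) S (I − Q)^#. -/

import Mathlib

/- Frames for Krein spaces ("J-frames"), following Giribet–Maestripieri–Martínez Pería–Massey.

A Krein space is modelled as a complex Hilbert space `H` together with a fundamental symmetry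
`J : H →L[ℂ] H` (selfadjoint, `J ∘L J = 1`); the indefinite inner product is `[x,y] = ⟪J x, y⟫`. -/

noncomputable section

open scoped ComplexInnerProductSpace ComplexOrder
open ContinuousLinearMap

attribute [local instance] Classical.propDecidable

namespace KreinFrames

universe u

variable {H : Type*} [NormedAddCommGroup H] [InnerProductSpace ℂ H]

/-- A subspace `M` is uniformly `J`-positive: `[x,x] ≥ α‖x‖²` on `M` for some `α > 0`. -/
def UnifJPos (J : H →L[ℂ] H) (M : Submodule ℂ H) : Prop :=
  ∃ α : ℝ, 0 < α ∧ ∀ x ∈ M, α * ‖x‖ ^ 2 ≤ (⟪J x, x⟫).re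

/-- A subspace `M` is uniformly `J`-negative: `[x,x] ≤ -α‖x‖²` on `M` for some `α > 0`. -/
def UnifJNeg (J : H →L[ℂ] H) (M : Submodule ℂ H) : Prop :=
  ∃ α : ℝ, 0 < α ∧ ∀ x ∈ M, (⟪J x, x⟫).re ≤ -(α * ‖x‖ ^ 2)

/-- Maximal uniformly `J`-positive subspace. -/
def MaxUnifJPos (J : H →L[ℂ] H) (M : Submodule ℂ H) : Prop :=
  UnifJPos J M ∧ ∀ M' : Submodule ℂ H, UnifJPos J M' → M ≤ M' → M' = M

/-- Maximal uniformly `J`-negative subspace. -/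
def MaxUnifJNeg (J : H →L[ℂ] H) (M : Submodule ℂ H) : Prop :=
  UnifJNeg J M ∧ ∀ M' : Submodule ℂ H, UnifJNeg J M' → M ≤ M' → M' = M

/-- The `J`-orthogonal companion `M^{[⊥]} = {x | [x,m] = 0 ∀ m ∈ M}` of a subspace `M`. -/
def Jorth (J : H →L[ℂ] H) (M : Submodule ℂ H) : Submodule ℂ H where
  carrier := {x | ∀ m ∈ M, ⟪J x, m⟫ = 0}
  zero_mem' := by intro m _; simp
  add_mem' := by
    intro a b ha hb m hm
    rw [map_add, inner_add_left, ha m hm, hb m hm, add_zero]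
  smul_mem' := by
    intro c x hx m hm
    rw [map_smul, inner_smul_left, hx m hm, mul_zero]

/-- `T : ℓ²(I) → H` is the synthesis operator of the family `f`, i.e. `T e_i = f_i`. -/
def IsSynthesis {I : Type*} (f : I → H) (T : lp (fun _ : I => ℂ) 2 →L[ℂ] H) : Prop :=
  ∀ i, T (lp.single 2 i 1) = f i

/-- `f` is a `J`-frame: it is a Bessel family (it admits a bounded synthesis operator `T`),
and the ranges of `T₊ = T P₊` and `T₋ = T P₋` (the synthesis operators of the subfamilies of
`J`-nonnegative and `J`-negative vectors) are maximal uniformly `J`-positive resp. maximal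
uniformly `J`-negative subspaces of `H`. -/
def IsJFrame {I : Type*} (J : H →L[ℂ] H) (f : I → H) : Prop :=
  ∃ T Tp Tm : lp (fun _ : I => ℂ) 2 →L[ℂ] H,
    IsSynthesis f T ∧
    IsSynthesis (fun i => if 0 ≤ (⟪J (f i), f i⟫).re then f i else 0) Tp ∧
    IsSynthesis (fun i => if 0 ≤ (⟪J (f i), f i⟫).re then 0 else f i) Tm ∧
    MaxUnifJPos J (LinearMap.range (Tp : (lp (fun _ : I => ℂ) 2) →ₗ[ℂ] H)) ∧ MaxUnifJNeg J (LinearMap.range (Tm : (lp (fun _ : I => ℂ) 2) →ₗ[ℂ] H))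

/-- `c₀(M, C)`: supremum of `|⟪m,n⟫|` over unit vectors `m ∈ M` and unit `J`-neutral vectors
`n` (the cone `C = {n | [n,n] = 0}`). -/
def c0 (J : H →L[ℂ] H) (M : Submodule ℂ H) : ℝ :=
  sSup {r : ℝ | ∃ m ∈ M, ∃ n : H, ⟪J n, n⟫ = 0 ∧ ‖m‖ = 1 ∧ ‖n‖ = 1 ∧ r = ‖⟪m, n⟫‖}

/-- Cosine of the Friedrichs angle between two subspaces. -/
def friedrichs (S T : Submodule ℂ H) : ℝ :=
  sSup {r : ℝ | ∃ x ∈ S ⊓ (S ⊓ T)ᗮ, ∃ y ∈ T ⊓ (S ⊓ T)ᗮ, ‖x‖ = 1 ∧ ‖y‖ = 1 ∧ r = ‖⟪x, y⟫‖}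

/-- The reduced minimum modulus `γ(A) = inf {‖Ax‖ : x ∈ N(A)^⊥, ‖x‖ = 1}`. -/
def rmm {E F : Type*} [NormedAddCommGroup E] [InnerProductSpace ℂ E]
    [NormedAddCommGroup F] [InnerProductSpace ℂ F] (A : E →L[ℂ] F) : ℝ :=
  sInf {r : ℝ | ∃ x ∈ (LinearMap.ker (A : E →ₗ[ℂ] F))ᗮ, ‖x‖ = 1 ∧ r = ‖A x‖}

/-- The set `Q` of bounded idempotents with uniformly `J`-positive range and uniformly
`J`-negative kernel. -/
def QSet (J : H →L[ℂ] H) : Set (H →L[ℂ] H) :=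
  {Q | Q ∘L Q = Q ∧ UnifJPos J (LinearMap.range (Q : H →ₗ[ℂ] H)) ∧ UnifJNeg J (LinearMap.ker (Q : H →ₗ[ℂ] H))}

/-- `ℓ²(s)` as a subspace of `ℓ²(I)`, for `s : Set I`. -/
def lpSub {I : Type*} (s : Set I) : Submodule ℂ (lp (fun _ : I => ℂ) 2) where
  carrier := {x | ∀ i ∉ s, x i = 0}
  zero_mem' := by intro i _; simp
  add_mem' := by
    intro a b ha hb i hi
    have h : (↑(a + b) : ∀ _ : I, ℂ) i = a i + b i := by rw [lp.coeFn_add]; rfl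
    rw [h, ha i hi, hb i hi, add_zero]
  smul_mem' := by
    intro c x hx i hi
    have h : (↑(c • x) : ∀ _ : I, ℂ) i = c • (x i : ℂ) := by rw [lp.coeFn_smul]; rfl
    rw [h, hx i hi, smul_zero]

/-- `S` is the `J`-frame operator of some `J`-frame: `S = T T^#` where `T` is the synthesis
operator of a `J`-frame and `T^# = J₂ T* J`. -/
def IsJFrameOperator {H : Type u} [NormedAddCommGroup H] [InnerProductSpace ℂ H]
    [CompleteSpace H] (J S : H →L[ℂ] H) : Prop :=
  ∃ (I : Type u) (f : I → H) (T Tp Tm : lp (fun _ : I => ℂ) 2 →L[ℂ] H)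
    (J2 : lp (fun _ : I => ℂ) 2 →L[ℂ] lp (fun _ : I => ℂ) 2),
    IsSynthesis f T ∧
    IsSynthesis (fun i => if 0 ≤ (⟪J (f i), f i⟫).re then f i else 0) Tp ∧
    IsSynthesis (fun i => if 0 ≤ (⟪J (f i), f i⟫).re then 0 else f i) Tm ∧
    MaxUnifJPos J (LinearMap.range (Tp : (lp (fun _ : I => ℂ) 2) →ₗ[ℂ] H)) ∧ MaxUnifJNeg J (LinearMap.range (Tm : (lp (fun _ : I => ℂ) 2) →ₗ[ℂ] H)) ∧
    (∀ (x : lp (fun _ : I => ℂ) 2) (i : I),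
      J2 x i = if 0 ≤ (⟪J (f i), f i⟫).re then (x i : ℂ) else -(x i : ℂ)) ∧
    S = T ∘L J2 ∘L adjoint T ∘L J


/-
Since `J₂` is `±1` on `ℓ²(I±)`, `T± J₂ = ±T±`, so `S± = T± T±* J`. An idempotent has closed
range and kernel, so `M± = R(T±)` are closed; then `T± T±*` is coercive on `M±` (open mapping),
hence maps onto it, and composing with the bijection `J` keeps the range. The kernel is
`J⁻¹ N(T±*) = J⁻¹ M±^⊥ = M±^{[⊥]}`. Finally `Q` fixes `M₊` and kills `M₋`, so in
`Q (T₊T₊* - T₋T₋*) J · J Q* J` only `T₊ (Q T₊)* J = T₊ T₊* J` survives.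
-/

section Adjoint

open scoped InnerProductSpace

variable {𝕜 E F : Type*} [RCLike 𝕜]
  [NormedAddCommGroup E] [InnerProductSpace 𝕜 E] [CompleteSpace E]
  [NormedAddCommGroup F] [InnerProductSpace 𝕜 F] [CompleteSpace F]

theorem exists_norm_le_mul_norm_adjoint_of_isClosed_range (A : E →L[𝕜] F)
    (hA : IsClosed (LinearMap.range (A : E →ₗ[𝕜] F) : Set F)) :
    ∃ C > 0, ∀ y ∈ LinearMap.range (A : E →ₗ[𝕜] F), ‖y‖ ≤ C * ‖adjoint A y‖ := by
  have : CompleteSpace (LinearMap.range (A : E →ₗ[𝕜] F)) := hA.completeSpace_coe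
  obtain ⟨C, hC, hpre⟩ := A.rangeRestrict.exists_preimage_norm_le (by
    rintro ⟨_, x, rfl⟩
    exact ⟨x, rfl⟩)
  refine ⟨C, hC, fun y hy => ?_⟩
  obtain ⟨x, hx, hxy⟩ := hpre ⟨y, hy⟩
  have hAx : A x = y := congrArg Subtype.val hx
  have key : ‖y‖ ^ 2 ≤ ‖adjoint A y‖ * (C * ‖y‖) :=
    calc ‖y‖ ^ 2 = RCLike.re ⟪adjoint A y, x⟫_𝕜 := by
          rw [adjoint_inner_left, hAx, inner_self_eq_norm_sq]
      _ ≤ ‖adjoint A y‖ * ‖x‖ := re_inner_le_norm _ _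
      _ ≤ ‖adjoint A y‖ * (C * ‖y‖) := by gcongr; exact hxy
  nlinarith [norm_nonneg y, mul_nonneg hC.le (norm_nonneg (adjoint A y))]

/-- Closed range makes `A A*` coercive on `R(A)`, hence onto it. -/
theorem range_comp_adjoint_of_isClosed_range (A : E →L[𝕜] F)
    (hA : IsClosed (LinearMap.range (A : E →ₗ[𝕜] F) : Set F)) :
    LinearMap.range ((A ∘L adjoint A : F →L[𝕜] F) : F →ₗ[𝕜] F) =
      LinearMap.range (A : E →ₗ[𝕜] F) := by
  obtain ⟨C, hC, hbound⟩ := exists_norm_le_mul_norm_adjoint_of_isClosed_range A hA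
  set N := LinearMap.range (A : E →ₗ[𝕜] F)
  have : CompleteSpace N := hA.completeSpace_coe
  let D : N →L[𝕜] N :=
    (A ∘L adjoint A ∘L N.subtypeL).codRestrict N fun y => LinearMap.mem_range_self _ _
  have hcoercive : ∀ y : N, ‖y‖ ^ 2 * (C⁻¹ ^ 2).toNNReal ≤ ‖⟪D y, y⟫_𝕜‖ := by
    intro y
    rw [Real.coe_toNNReal _ (by positivity)]
    have hy : ‖(y : F)‖ * C⁻¹ ≤ ‖adjoint A y‖ := by
      rw [mul_inv_le_iff₀ hC, mul_comm]; exact hbound y y.2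
    calc ‖y‖ ^ 2 * C⁻¹ ^ 2 = (‖(y : F)‖ * C⁻¹) ^ 2 := by rw [mul_pow]; rfl
      _ ≤ ‖adjoint A y‖ ^ 2 := by gcongr
      _ = ‖⟪D y, y⟫_𝕜‖ := by
          change _ = ‖⟪A (adjoint A y), y⟫_𝕜‖
          rw [← adjoint_inner_right, inner_self_eq_norm_sq_to_K]
          simp
  have hD : IsUnit D := isUnit_of_forall_le_norm_inner_map D (by positivity) hcoercive
  refine le_antisymm (by rintro _ ⟨x, rfl⟩; exact ⟨adjoint A x, rfl⟩) fun y hy => ?_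
  obtain ⟨z, hz⟩ := (isUnit_iff_bijective.mp hD).2 ⟨y, hy⟩
  exact ⟨z, congrArg Subtype.val hz⟩

theorem range_comp_adjoint_comp_of_isClosed_range (A : E →L[𝕜] F) {J : F →L[𝕜] F}
    (hJ : J ∘L J = 1) (hA : IsClosed (LinearMap.range (A : E →ₗ[𝕜] F) : Set F)) :
    LinearMap.range ((A ∘L adjoint A ∘L J : F →L[𝕜] F) : F →ₗ[𝕜] F) =
      LinearMap.range (A : E →ₗ[𝕜] F) := by
  have hJsurj : LinearMap.range (J : F →ₗ[𝕜] F) = ⊤ :=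
    LinearMap.range_eq_top.mpr fun y => ⟨J y, by simpa using congrArg (· y) hJ⟩
  rw [← comp_assoc, toLinearMap_comp, LinearMap.range_comp_of_range_eq_top _ hJsurj,
    range_comp_adjoint_of_isClosed_range A hA]

theorem comp_sub_comp_jAdjoint_eq {A B : E →L[𝕜] F} {J P : F →L[𝕜] F} (hJ : J ∘L J = 1)
    (hPA : P ∘L A = A) (hPB : P ∘L B = 0) :
    P ∘L (A ∘L adjoint A ∘L J - B ∘L adjoint B ∘L J) ∘L (J ∘L adjoint P ∘L J) =
      A ∘L adjoint A ∘L J := by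
  have hJJ (y : F) : J (J y) = y := by simpa using congrArg (· y) hJ
  have hPAy (x : E) : P (A x) = A x := by simpa using congrArg (· x) hPA
  have hPBy (x : E) : P (B x) = 0 := by simpa using congrArg (· x) hPB
  have hAP (y : F) : adjoint A (adjoint P y) = adjoint A y := by
    simpa [adjoint_comp] using congrArg (fun T => adjoint T y) hPA
  ext y
  simp [hJJ, hPAy, hPBy, hAP]

end Adjoint

theorem jorth_eq_comap_orthogonal (J : H →L[ℂ] H) (M : Submodule ℂ H) :
    Jorth J M = Mᗮ.comap (J : H →ₗ[ℂ] H) := by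
  ext x
  exact (Submodule.mem_orthogonal' M (J x)).symm

theorem ker_comp_adjoint_comp_eq_jorth {E : Type*} [NormedAddCommGroup E] [InnerProductSpace ℂ E]
    [CompleteSpace E] [CompleteSpace H] (A : E →L[ℂ] H) (J : H →L[ℂ] H) :
    LinearMap.ker ((A ∘L adjoint A ∘L J : H →L[ℂ] H) : H →ₗ[ℂ] H) =
      Jorth J (LinearMap.range (A : E →ₗ[ℂ] H)) := by
  rw [jorth_eq_comap_orthogonal, orthogonal_range, ← ker_self_comp_adjoint, ← comp_assoc,
    toLinearMap_comp, LinearMap.ker_comp]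

section Synthesis

variable {I : Type*} {g : I → H} {T : lp (fun _ : I => ℂ) 2 →L[ℂ] H}

theorem IsSynthesis.hasSum (hT : IsSynthesis g T) (x : lp (fun _ : I => ℂ) 2) :
    HasSum (fun i => x i • g i) (T x) := by
  have hx : HasSum (fun i => lp.single 2 i (x i)) x := lp.hasSum_single (by norm_num) x
  convert hx.mapL T using 2 with i
  rw [← hT i, ← map_smul, ← lp.single_smul, smul_eq_mul, mul_one]

theorem IsSynthesis.unique {T' : lp (fun _ : I => ℂ) 2 →L[ℂ] H} (hT : IsSynthesis g T)
    (hT' : IsSynthesis g T') : T = T' :=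
  ext fun x => (hT.hasSum x).unique (hT'.hasSum x)

variable {p : I → Prop} [DecidablePred p] {D : lp (fun _ : I => ℂ) 2 →L[ℂ] lp (fun _ : I => ℂ) 2}

theorem IsSynthesis.comp_signs (hT : IsSynthesis g T)
    (hD : ∀ x i, D x i = if p i then x i else -x i) :
    IsSynthesis (fun i => if p i then g i else -g i) (T ∘L D) := by
  intro i
  have hDi : D (lp.single 2 i 1) = if p i then lp.single 2 i 1 else -lp.single 2 i 1 := by
    ext j
    rw [hD]
    by_cases hji : j = i
    · subst hji; split_ifs <;> simp
    · split_ifs <;> simp [lp.single_apply, hji]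
  rw [comp_apply, hDi]
  by_cases h : p i <;> simp [h, hT i]

theorem IsSynthesis.comp_signs_eq_self {f : I → H}
    (hT : IsSynthesis (fun i => if p i then f i else 0) T)
    (hD : ∀ x i, D x i = if p i then x i else -x i) : T ∘L D = T :=
  (hT.comp_signs hD).unique (fun i => by by_cases h : p i <;> simp [h, hT i])

theorem IsSynthesis.comp_signs_eq_neg {f : I → H}
    (hT : IsSynthesis (fun i => if p i then 0 else f i) T)
    (hD : ∀ x i, D x i = if p i then x i else -x i) : T ∘L D = -T :=
  (hT.comp_signs hD).unique (fun i => by by_cases h : p i <;> simp [h, hT i])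

end Synthesis

theorem statement13_general {H I : Type*} [NormedAddCommGroup H] [InnerProductSpace ℂ H] [CompleteSpace H]
    (J : H →L[ℂ] H) (hJsq : J ∘L J = 1)
    (f : I → H) (Tp Tm : lp (fun _ : I => ℂ) 2 →L[ℂ] H)
    (hTp : IsSynthesis (fun i => if 0 ≤ (⟪J (f i), f i⟫).re then f i else 0) Tp)
    (hTm : IsSynthesis (fun i => if 0 ≤ (⟪J (f i), f i⟫).re then 0 else f i) Tm)
    (J2 : lp (fun _ : I => ℂ) 2 →L[ℂ] lp (fun _ : I => ℂ) 2)
    (hJ2 : ∀ (x : lp (fun _ : I => ℂ) 2) (i : I),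
      J2 x i = if 0 ≤ (⟪J (f i), f i⟫).re then (x i : ℂ) else -(x i : ℂ))
    (S Sp Sm : H →L[ℂ] H)
    (hSp : Sp = Tp ∘L J2 ∘L adjoint Tp ∘L J)
    (hSm : Sm = -(Tm ∘L J2 ∘L adjoint Tm ∘L J))
    (hS : S = Sp - Sm)
    (Q : H →L[ℂ] H) (hQ : Q ∘L Q = Q)
    (hQr : LinearMap.range (Q : H →ₗ[ℂ] H) = LinearMap.range (Tp : (lp (fun _ : I => ℂ) 2) →ₗ[ℂ] H))
    (hQk : LinearMap.ker (Q : H →ₗ[ℂ] H) = LinearMap.range (Tm : (lp (fun _ : I => ℂ) 2) →ₗ[ℂ] H)) :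
    LinearMap.range (Sp : H →ₗ[ℂ] H) = LinearMap.range (Tp : (lp (fun _ : I => ℂ) 2) →ₗ[ℂ] H) ∧
    LinearMap.ker (Sp : H →ₗ[ℂ] H) = Jorth J (LinearMap.range (Tp : (lp (fun _ : I => ℂ) 2) →ₗ[ℂ] H)) ∧
    LinearMap.range (Sm : H →ₗ[ℂ] H) = LinearMap.range (Tm : (lp (fun _ : I => ℂ) 2) →ₗ[ℂ] H) ∧
    LinearMap.ker (Sm : H →ₗ[ℂ] H) = Jorth J (LinearMap.range (Tm : (lp (fun _ : I => ℂ) 2) →ₗ[ℂ] H)) ∧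
    Sp = Q ∘L S ∘L (J ∘L adjoint Q ∘L J) ∧
    Sm = -((1 - Q) ∘L S ∘L (J ∘L adjoint (1 - Q) ∘L J)) := by
  have hSp' : Sp = Tp ∘L adjoint Tp ∘L J := by
    rw [hSp, ← comp_assoc, hTp.comp_signs_eq_self hJ2]
  have hSm' : Sm = Tm ∘L adjoint Tm ∘L J := by
    rw [hSm, ← comp_assoc, hTm.comp_signs_eq_neg hJ2, neg_comp, neg_neg]
  have hQidem : IsIdempotentElem Q := hQ
  have hQTp : Q ∘L Tp = Tp :=
    ext fun u => (LinearMap.IsIdempotentElem.mem_range_iff hQidem.toLinearMap).mp (hQr.ge ⟨u, rfl⟩)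
  have hQTm : Q ∘L Tm = 0 := ext fun u => hQk.ge (LinearMap.mem_range_self (Tm : lp (fun _ : I => ℂ) 2 →ₗ[ℂ] H) u)
  have hclp : IsClosed (LinearMap.range (Tp : lp (fun _ : I => ℂ) 2 →ₗ[ℂ] H) : Set H) := by
    rw [← hQr]; exact hQidem.isClosed_range
  have hclm : IsClosed (LinearMap.range (Tm : lp (fun _ : I => ℂ) 2 →ₗ[ℂ] H) : Set H) := by
    rw [← hQk]; exact Q.isClosed_ker
  refine ⟨?_, ?_, ?_, ?_, ?_, ?_⟩
  · rw [hSp']; exact range_comp_adjoint_comp_of_isClosed_range Tp hJsq hclp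
  · rw [hSp']; exact ker_comp_adjoint_comp_eq_jorth Tp J
  · rw [hSm']; exact range_comp_adjoint_comp_of_isClosed_range Tm hJsq hclm
  · rw [hSm']; exact ker_comp_adjoint_comp_eq_jorth Tm J
  · rw [hS, hSp', hSm']
    exact (comp_sub_comp_jAdjoint_eq hJsq hQTp hQTm).symm
  · rw [hS, ← neg_sub Sm Sp, neg_comp, comp_neg, neg_neg, hSp', hSm']
    refine (comp_sub_comp_jAdjoint_eq hJsq ?_ ?_).symm
    · rw [sub_comp, hQTm, sub_zero]; exact id_comp Tm
    · rw [sub_comp, hQTp, sub_eq_zero]; exact id_comp Tp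

/-- ranges and kernels of `S± = ±T± T±^#`, and the block formulas
`S₊ = Q S Q^#`, `S₋ = -(I-Q) S (I-Q)^#` for `Q = P_{M₊ // M₋}`. -/
theorem statement13 {H I : Type*} [NormedAddCommGroup H] [InnerProductSpace ℂ H] [CompleteSpace H]
    (J : H →L[ℂ] H) (hJsa : IsSelfAdjoint J) (hJsq : J ∘L J = 1)
    (f : I → H) (T Tp Tm : lp (fun _ : I => ℂ) 2 →L[ℂ] H)
    (hT : IsSynthesis f T)
    (hTp : IsSynthesis (fun i => if 0 ≤ (⟪J (f i), f i⟫).re then f i else 0) Tp)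
    (hTm : IsSynthesis (fun i => if 0 ≤ (⟪J (f i), f i⟫).re then 0 else f i) Tm)
    (hmaxp : MaxUnifJPos J (LinearMap.range (Tp : (lp (fun _ : I => ℂ) 2) →ₗ[ℂ] H)))
    (hmaxm : MaxUnifJNeg J (LinearMap.range (Tm : (lp (fun _ : I => ℂ) 2) →ₗ[ℂ] H)))
    (J2 : lp (fun _ : I => ℂ) 2 →L[ℂ] lp (fun _ : I => ℂ) 2)
    (hJ2 : ∀ (x : lp (fun _ : I => ℂ) 2) (i : I),
      J2 x i = if 0 ≤ (⟪J (f i), f i⟫).re then (x i : ℂ) else -(x i : ℂ))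
    (S Sp Sm : H →L[ℂ] H)
    (hSp : Sp = Tp ∘L J2 ∘L adjoint Tp ∘L J)
    (hSm : Sm = -(Tm ∘L J2 ∘L adjoint Tm ∘L J))
    (hS : S = Sp - Sm)
    (Q : H →L[ℂ] H) (hQ : Q ∘L Q = Q)
    (hQr : LinearMap.range (Q : H →ₗ[ℂ] H) = LinearMap.range (Tp : (lp (fun _ : I => ℂ) 2) →ₗ[ℂ] H))
    (hQk : LinearMap.ker (Q : H →ₗ[ℂ] H) = LinearMap.range (Tm : (lp (fun _ : I => ℂ) 2) →ₗ[ℂ] H)) :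
    LinearMap.range (Sp : H →ₗ[ℂ] H) = LinearMap.range (Tp : (lp (fun _ : I => ℂ) 2) →ₗ[ℂ] H) ∧
    LinearMap.ker (Sp : H →ₗ[ℂ] H) = Jorth J (LinearMap.range (Tp : (lp (fun _ : I => ℂ) 2) →ₗ[ℂ] H)) ∧
    LinearMap.range (Sm : H →ₗ[ℂ] H) = LinearMap.range (Tm : (lp (fun _ : I => ℂ) 2) →ₗ[ℂ] H) ∧
    LinearMap.ker (Sm : H →ₗ[ℂ] H) = Jorth J (LinearMap.range (Tm : (lp (fun _ : I => ℂ) 2) →ₗ[ℂ] H)) ∧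
    Sp = Q ∘L S ∘L (J ∘L adjoint Q ∘L J) ∧
    Sm = -((1 - Q) ∘L S ∘L (J ∘L adjoint (1 - Q) ∘L J)) :=
  statement13_general J hJsq f Tp Tm hTp hTm J2 hJ2 S Sp Sm hSp hSm hS Q hQ hQr hQk

end KreinFrames
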